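/- If Δ ≤_1 (Δ₁, Δ₂), then there exist Δ₁' and Δ₂' such that Δ = (Δ₁', Δ₂'), Δ₁' ≤_1 Δ₁, and Δ₂' ≤_1 Δ₂. -/
import Mathlib


/-! Formalization of the probabilistic mixed-choice multiparty session type
(PMCMP) π-calculus: session types, local contexts, labelled transitions,
safety, deadlock-freedom, multi-channel subtyping, single-channel subtyping,
standard subtyping, processes, structural congruence, reduction and typing. -/

abbrev Role := ℕ
abbrev Label := ℕ
abbrev Session := ℕ

inductive Base where
  | nat | bool
deriving DecidableEq

/-- Output head: `some (p,q,l,U)` is the send `p→q!l⟨U⟩`; `none` is the internal action τ. -/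
abbrev Head := Option (Role × Role × Label × Base)

/-- Session types: end, recursion variable, recursion, and mixed choice consisting of a
list of inputs `p←q?l(U).T` and a list of probabilistic output sums `⊕ᵢ ①_{pᵢ} Hᵢ.Tᵢ`. -/
inductive SType : Type where
  | tend : SType
  | tvar : ℕ → SType
  | mu   : SType → SType
  | choice : List (Role × Role × Label × Base × SType) →
             List (List (ℝ × Head × SType)) → SType

abbrev InpT := Role × Role × Label × Base × SType
abbrev OutSum := List (ℝ × Head × SType)

/-- A channel `s[r]`: a session together with a set of roles. -/
structure Channel where
  session : Session
  roles : Finset Role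

/-- A local context: a finite list of channel/type assignments. -/
abbrev Ctx := List (Channel × SType)

def rolesOfCtx (Δ : Ctx) : Finset Role := Δ.foldr (fun e a => e.1.roles ∪ a) ∅
def sessionsOf (Δ : Ctx) : Finset Session := Δ.foldr (fun e a => insert e.1.session a) ∅

/-- Linear composability: the role sets of the two contexts are disjoint. -/
def Linear (Δ₁ Δ₂ : Ctx) : Prop := Disjoint (rolesOfCtx Δ₁) (rolesOfCtx Δ₂)

def roleIn (q : Role) (Δ : Ctx) : Prop := ∃ e ∈ Δ, q ∈ e.1.roles

/-- Local contexts possibly carrying an active channel. -/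
inductive ACtx where
  | plain (Δ : Ctx)
  | active (c : Channel) (Δ : Ctx)

/-- Transition labels. -/
inductive TLabel where
  | inp (s : Session) (p q : Role) (l : Label) (U : Base)
  | out (s : Session) (p q : Role) (l : Label) (U : Base)
  | tau (s : Session)
  | com (s : Session) (p q : Role) (l : Label) (U : Base)

/-- Labelled transitions of local contexts (Definition of labelled transitions). -/
inductive LStep : Ctx → TLabel → ℝ → Ctx → Prop where
  | inp {c : Channel} {inps : List InpT} {outs : List OutSum} {Δ : Ctx}
      {p q : Role} {l : Label} {U : Base} {T' : SType} :
      (p, q, l, U, T') ∈ inps →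
      LStep ((c, SType.choice inps outs) :: Δ) (.inp c.session p q l U) 1 ((c, T') :: Δ)
  | out {c : Channel} {inps : List InpT} {outs : List OutSum} {Δ : Ctx} {po : OutSum}
      {prob : ℝ} {p q : Role} {l : Label} {U : Base} {T' : SType} :
      po ∈ outs → (prob, some (p, q, l, U), T') ∈ po →
      LStep ((c, SType.choice inps outs) :: Δ) (.out c.session p q l U) prob ((c, T') :: Δ)
  | tau {c : Channel} {inps : List InpT} {outs : List OutSum} {Δ : Ctx} {po : OutSum}
      {prob : ℝ} {T' : SType} :
      po ∈ outs → (prob, (none : Head), T') ∈ po →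
      LStep ((c, SType.choice inps outs) :: Δ) (.tau c.session) prob ((c, T') :: Δ)
  | com {c₁ c₂ : Channel} {inps₁ inps₂ : List InpT} {outs₁ outs₂ : List OutSum}
      {Δ : Ctx} {po : OutSum} {prob : ℝ} {p q : Role} {l : Label} {U : Base} {T₁' T₂' : SType} :
      c₁.session = c₂.session →
      po ∈ outs₁ → (prob, some (p, q, l, U), T₁') ∈ po →
      (q, p, l, U, T₂') ∈ inps₂ →
      LStep ((c₁, SType.choice inps₁ outs₁) :: (c₂, SType.choice inps₂ outs₂) :: Δ)
            (.com c₁.session p q l U) prob ((c₁, T₁') :: (c₂, T₂') :: Δ)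
  | perm {Δ₁ Δ₁' Δ₂ Δ₂' : Ctx} {α : TLabel} {prob : ℝ} :
      Δ₁.Perm Δ₁' → LStep Δ₁' α prob Δ₂' → Δ₂'.Perm Δ₂ →
      LStep Δ₁ α prob Δ₂

/-- `Δ ↦_p Δ'`: a single communication or internal step. -/
def Red (Δ : Ctx) (p : ℝ) (Δ' : Ctx) : Prop :=
  (∃ s, LStep Δ (.tau s) p Δ') ∨ (∃ s a b l U, LStep Δ (.com s a b l U) p Δ')

/-- `Δ ↦*_p Δ'`: probability-multiplying reflexive transitive closure. -/
inductive Reds : Ctx → ℝ → Ctx → Prop where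
  | refl (Δ : Ctx) : Reds Δ 1 Δ
  | step {Δ Δ' Δ'' : Ctx} {p q : ℝ} : Red Δ p Δ' → Reds Δ' q Δ'' → Reds Δ (p * q) Δ''

/-- Reduction of local contexts with an active channel. -/
inductive ARed : ACtx → ℝ → ACtx → Prop where
  | plain {Δ Δ' : Ctx} {p : ℝ} : Red Δ p Δ' → ARed (.plain Δ) p (.plain Δ')
  | atau {c : Channel} {Δ Δ' : Ctx} {p : ℝ} :
      (∃ s, LStep Δ (.tau s) p Δ') → ARed (.active c Δ) p (.plain Δ')
  | acom {c : Channel} {Δ Δ' : Ctx} {p : ℝ} {s : Session} {a b : Role} {l : Label} {U : Base} :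
      a ∈ c.roles → LStep Δ (.com s a b l U) p Δ' → ARed (.active c Δ) p (.plain Δ')

inductive AReds : ACtx → ℝ → ACtx → Prop where
  | refl (Λ : ACtx) : AReds Λ 1 Λ
  | step {Λ Λ' Λ'' : ACtx} {p q : ℝ} : ARed Λ p Λ' → AReds Λ' q Λ'' → AReds Λ (p * q) Λ''

/-- A safety property of local contexts (with or without active channel). -/
def SafetyProperty (φ : ACtx → Prop) : Prop :=
  ∀ Λ, φ Λ →
    (∀ Δ, Λ = .plain Δ →
      (∀ s p q l U l' U' prob Δ₁ Δ₂,
        LStep Δ (.out s p q l U) prob Δ₁ →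
        LStep Δ (.inp s q p l' U') 1 Δ₂ →
        ∃ Δ', LStep Δ (.com s p q l U) prob Δ' ∧ φ (.plain Δ')) ∧
      (∀ s prob Δ', LStep Δ (.tau s) prob Δ' → φ (.plain Δ'))) ∧
    (∀ c Δ, Λ = .active c Δ →
      (∀ s p q l U l' U' prob Δ₁ Δ₂,
        p ∈ c.roles →
        LStep Δ (.out s p q l U) prob Δ₁ →
        LStep Δ (.inp s q p l' U') 1 Δ₂ →
        ∃ Δ', LStep Δ (.com s p q l U) prob Δ' ∧ φ (.plain Δ')) ∧
      (∀ s prob Δ', LStep Δ (.tau s) prob Δ' → φ (.plain Δ')))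

/-- `Λ` is safe if some safety property holds of it. -/
def safeA (Λ : ACtx) : Prop := ∃ φ, SafetyProperty φ ∧ φ Λ

def safe (Δ : Ctx) : Prop := safeA (.plain Δ)

/-- A context with active channel `c` is pending: all of `c`'s inputs await partners
inside `Δ`, and each probabilistic choice of `c` contains an output whose partner is in
`Δ` but offers no matching input. -/
def Pending (c : Channel) (Δ : Ctx) : Prop :=
  ∃ inps outs, (c, SType.choice inps outs) ∈ Δ ∧
    (∀ i ∈ inps, roleIn (i.2.1 : Role) Δ) ∧
    (∀ po ∈ outs, ∃ x ∈ po, ∃ p q l U, (x.2.1 : Head) = some (p, q, l, U) ∧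
      ∃ c' T, (c', T) ∈ Δ ∧ q ∈ c'.roles ∧
        ∀ inps' outs', T = SType.choice inps' outs' →
          ∀ y ∈ inps', ¬ (y.1 = q ∧ y.2.1 = p ∧ y.2.2.1 = l))

def StuckA : ACtx → Prop := fun Λ => ∃ c Δ, Λ = ACtx.active c Δ ∧ Pending c Δ

/-- Deadlock-freedom of (active-channel) local contexts. -/
def dfreeA (Λ : ACtx) : Prop :=
  (∀ p Λ', AReds Λ p Λ' → (∀ q Λ'', ¬ ARed Λ' q Λ'') → Λ' = ACtx.plain []) ∨ StuckA Λ

def dfree (Δ : Ctx) : Prop := dfreeA (.plain Δ)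

/-- The prefix of a probabilistic output sum: probabilities together with the
sender/receiver pair (or τ). -/
def outPre (o : OutSum) : List (ℝ × Option (Role × Role)) :=
  o.map (fun x => (x.1, x.2.1.map (fun h => (h.1, h.2.1))))

/-- Multi-channel subtyping `Λ ≤_p Δ` (supertype contexts never carry an active channel). -/
inductive SubT : ACtx → ℝ → Ctx → Prop where
  /-- [S-∅-1] -/
  | empty1 : SubT (.plain []) 1 []
  /-- [S-∅]: a pending context is a subtype of the empty context. -/
  | pend {c : Channel} {Δ : Ctx} {p : ℝ} : Pending c Δ → SubT (.active c Δ) p []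
  /-- [S-Split] -/
  | split {Δ₁' Δ₂' Δ : Ctx} {ct : Channel × SType} :
      SubT (.plain Δ₁') 1 Δ → SubT (.plain Δ₂') 1 [ct] →
      SubT (.plain (Δ₁' ++ Δ₂')) 1 (Δ ++ [ct])
  /-- [S-Σ-1]: branch, setting each channel of the refinement active in turn;
  the supertype's mixed choice is assembled from the per-channel parts. -/
  | sigma1 {Δ : Ctx} {c : Channel} {p : ℝ} {parts : List (List InpT × List OutSum)} :
      Δ.length = parts.length →
      ((parts.map Prod.fst).flatten ≠ [] ∨ (parts.map Prod.snd).flatten ≠ []) →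
      (∀ x ∈ Δ.zip parts, SubT (.active x.1.1 Δ) p [(c, SType.choice x.2.1 x.2.2)]) →
      SubT (.plain Δ) p [(c, SType.choice (parts.map Prod.fst).flatten (parts.map Prod.snd).flatten)]
  /-- [S-Σ-2] -/
  | sigma2 {c' c : Channel} {Δ : Ctx} {I' I : List InpT} {O' O : List OutSum} {p : ℝ} :
      (I ≠ [] ∨ O ≠ []) →
      SubT (.active c' ((c', SType.choice I' []) :: Δ)) p [(c, SType.choice I [])] →
      SubT (.active c' ((c', SType.choice [] O') :: Δ)) p [(c, SType.choice [] O)] →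
      SubT (.active c' ((c', SType.choice I' O') :: Δ)) p [(c, SType.choice I O)]
  /-- [S-Σ-ι] -/
  | sigmaIn {c' c : Channel} {Δ : Ctx} {p : ℝ} {I' J' : List InpT}
      {groups : List (List InpT × List OutSum)} :
      I'.length = groups.length →
      ((groups.map Prod.fst).flatten ≠ [] ∨ (groups.map Prod.snd).flatten ≠ []) →
      (∀ j ∈ J', ∃ i ∈ I', j.1 = i.1 ∧ j.2.1 = i.2.1) →
      (∀ x ∈ I'.zip groups,
        SubT (.active c' ((c', SType.choice [x.1] []) :: Δ)) p [(c, SType.choice x.2.1 x.2.2)]) →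
      SubT (.active c' ((c', SType.choice (I' ++ J') []) :: Δ)) p
          [(c, SType.choice (groups.map Prod.fst).flatten (groups.map Prod.snd).flatten)]
  /-- [S-Σ-ω] -/
  | sigmaOut {c' c : Channel} {Δ : Ctx} {p : ℝ} {I' J : List OutSum}
      {groups : List (List InpT × List OutSum)} :
      I'.length = groups.length →
      ((groups.map Prod.fst).flatten ≠ [] ∨ (groups.map Prod.snd).flatten ++ J ≠ []) →
      (∀ j ∈ J, ∃ i ∈ I', outPre j = outPre i) →
      (∀ x ∈ I'.zip groups,
        SubT (.active c' ((c', SType.choice [] [x.1]) :: Δ)) p [(c, SType.choice x.2.1 x.2.2)]) →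
      SubT (.active c' ((c', SType.choice [] I') :: Δ)) p
          [(c, SType.choice (groups.map Prod.fst).flatten ((groups.map Prod.snd).flatten ++ J))]
  /-- [S-⊕]: split a probabilistic choice, tracking probabilities multiplicatively. -/
  | oplus {c' c : Channel} {Δ : Ctx} {lhs : OutSum} {groups : List OutSum} {pS : ℝ} :
      lhs.length = groups.length →
      groups.flatten ≠ [] →
      ((groups.flatten).map Prod.fst).sum = pS →
      (∀ x ∈ lhs.zip groups,
        SubT (.active c' ((c', SType.choice [] [[((1 : ℝ), x.1.2.1, x.1.2.2)]]) :: Δ))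
            (x.1.1 * pS) [(c, SType.choice [] [x.2])]) →
      SubT (.active c' ((c', SType.choice [] [lhs]) :: Δ)) pS [(c, SType.choice [] groups)]
  /-- [S-ι] -/
  | sinp {c₁ c₂ : Channel} {Δ : Ctx} {q pr : Role} {l : Label} {U : Base} {T' T : SType} :
      c₁.roles ⊆ c₂.roles → q ∈ c₂.roles → ¬ roleIn pr Δ → c₁.session = c₂.session →
      SubT (.plain ((c₁, T') :: Δ)) 1 [(c₂, T)] →
      SubT (.active c₁ ((c₁, SType.choice [(q, pr, l, U, T')] []) :: Δ)) 1
          [(c₂, SType.choice [(q, pr, l, U, T)] [])]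
  /-- [S-ω] -/
  | sout {c₁ c₂ : Channel} {Δ : Ctx} {p q : Role} {l : Label} {U : Base} {T' T : SType} {prob : ℝ} :
      c₁.roles ⊆ c₂.roles → p ∈ c₂.roles → ¬ roleIn q Δ → c₁.session = c₂.session →
      SubT (.plain ((c₁, T') :: Δ)) 1 [(c₂, T)] →
      SubT (.active c₁ ((c₁, SType.choice [] [[((1 : ℝ), some (p, q, l, U), T')]]) :: Δ)) prob
          [(c₂, SType.choice [] [[(prob, some (p, q, l, U), T)]])]
  /-- [S-Link]: conceal an internal communication of the refinement. -/
  | link {c₁ c₂ c : Channel} {Δ : Ctx} {p q : Role} {l : Label} {U : Base}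
      {T₁' T₂' T : SType} {rest : List InpT} {outs : List OutSum} {prob : ℝ} :
      p ∈ c₁.roles → q ∈ c₂.roles →
      SubT (.plain ((c₁, T₁') :: (c₂, T₂') :: Δ)) prob [(c, T)] →
      SubT (.active c₁ ((c₁, SType.choice [] [[((1 : ℝ), some (p, q, l, U), T₁')]]) ::
                       (c₂, SType.choice ((q, p, l, U, T₂') :: rest) outs) :: Δ)) prob [(c, T)]
  /-- [S-τ-L] -/
  | tauL {c₁ c : Channel} {Δ : Ctx} {T' T : SType} {prob : ℝ} :
      SubT (.plain ((c₁, T') :: Δ)) prob [(c, T)] →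
      SubT (.active c₁ ((c₁, SType.choice [] [[((1 : ℝ), (none : Head), T')]]) :: Δ)) prob [(c, T)]
  /-- [S-τ-R] -/
  | tauR {Λ : ACtx} {c : Channel} {T : SType} {prob : ℝ} :
      SubT Λ 1 [(c, T)] →
      SubT Λ prob [(c, SType.choice [] [[(prob, (none : Head), T)]])]

/-- Well-formed session types: probabilities of each probabilistic choice sum to 1. -/
inductive WF : SType → Prop where
  | tend : WF .tend
  | tvar {n : ℕ} : WF (.tvar n)
  | mu {T : SType} : WF T → WF (.mu T)
  | choice {inps : List InpT} {outs : List OutSum} :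
      (∀ o ∈ outs, (o.map Prod.fst).sum = 1) →
      (∀ o ∈ outs, ∀ x ∈ o, WF x.2.2) →
      (∀ i ∈ inps, WF i.2.2.2.2) →
      WF (.choice inps outs)

def WFCtx (Δ : Ctx) : Prop := ∀ e ∈ Δ, WF e.2

/-- Single-channel subtyping `Δ' ≤_p Δ`: the subtype side is a single typed channel
(lifted to contexts by splitting), no active channels. -/
inductive SubS : Ctx → ℝ → Ctx → Prop where
  | empty : SubS [] 1 []
  | split {Δ₁' Δ₂' Δ : Ctx} {ct : Channel × SType} :
      SubS Δ₁' 1 Δ → SubS Δ₂' 1 [ct] → SubS (Δ₁' ++ Δ₂') 1 (Δ ++ [ct])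
  | sigma {c' c : Channel} {I' I : List InpT} {O' O : List OutSum} {p : ℝ} :
      (I ≠ [] ∨ O ≠ []) →
      SubS [(c', SType.choice I' [])] p [(c, SType.choice I [])] →
      SubS [(c', SType.choice [] O')] p [(c, SType.choice [] O)] →
      SubS [(c', SType.choice I' O')] p [(c, SType.choice I O)]
  | sigmaIn {c' c : Channel} {p : ℝ} {I' J' : List InpT}
      {groups : List (List InpT × List OutSum)} :
      I'.length = groups.length →
      ((groups.map Prod.fst).flatten ≠ [] ∨ (groups.map Prod.snd).flatten ≠ []) →
      (∀ j ∈ J', ∃ i ∈ I', j.1 = i.1 ∧ j.2.1 = i.2.1) →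
      (∀ x ∈ I'.zip groups,
        SubS [(c', SType.choice [x.1] [])] p [(c, SType.choice x.2.1 x.2.2)]) →
      SubS [(c', SType.choice (I' ++ J') [])] p
           [(c, SType.choice (groups.map Prod.fst).flatten (groups.map Prod.snd).flatten)]
  | sigmaOut {c' c : Channel} {p : ℝ} {I' J : List OutSum}
      {groups : List (List InpT × List OutSum)} :
      I'.length = groups.length →
      ((groups.map Prod.fst).flatten ≠ [] ∨ (groups.map Prod.snd).flatten ++ J ≠ []) →
      (∀ j ∈ J, ∃ i ∈ I', outPre j = outPre i) →
      (∀ x ∈ I'.zip groups,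
        SubS [(c', SType.choice [] [x.1])] p [(c, SType.choice x.2.1 x.2.2)]) →
      SubS [(c', SType.choice [] I')] p
           [(c, SType.choice (groups.map Prod.fst).flatten ((groups.map Prod.snd).flatten ++ J))]
  | oplus {c' c : Channel} {lhs : OutSum} {groups : List OutSum} {pS : ℝ} :
      lhs.length = groups.length →
      groups.flatten ≠ [] →
      ((groups.flatten).map Prod.fst).sum = pS →
      (∀ x ∈ lhs.zip groups,
        SubS [(c', SType.choice [] [[((1 : ℝ), x.1.2.1, x.1.2.2)]])] (x.1.1 * pS)
             [(c, SType.choice [] [x.2])]) →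
      SubS [(c', SType.choice [] [lhs])] pS [(c, SType.choice [] groups)]
  | sinp {c₁ c₂ : Channel} {q pr : Role} {l : Label} {U : Base} {T' T : SType} :
      c₁.roles ⊆ c₂.roles → q ∈ c₂.roles → c₁.session = c₂.session →
      SubS [(c₁, T')] 1 [(c₂, T)] →
      SubS [(c₁, SType.choice [(q, pr, l, U, T')] [])] 1
           [(c₂, SType.choice [(q, pr, l, U, T)] [])]
  | sout {c₁ c₂ : Channel} {p q : Role} {l : Label} {U : Base} {T' T : SType} {prob : ℝ} :
      c₁.roles ⊆ c₂.roles → p ∈ c₂.roles → c₁.session = c₂.session →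
      SubS [(c₁, T')] 1 [(c₂, T)] →
      SubS [(c₁, SType.choice [] [[((1 : ℝ), some (p, q, l, U), T')]])] prob
           [(c₂, SType.choice [] [[(prob, some (p, q, l, U), T)]])]
  | stau {c₁ c₂ : Channel} {T' T : SType} {prob : ℝ} :
      SubS [(c₁, T')] 1 [(c₂, T)] →
      SubS [(c₁, SType.choice [] [[((1 : ℝ), (none : Head), T')]])] prob
           [(c₂, SType.choice [] [[(prob, (none : Head), T)]])]

/-- Standard (per-type) subtyping of session types: more external (input) choices,
fewer internal (output) choices, prefix-set side conditions. -/
inductive SubStd : SType → SType → Prop where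
  | tend : SubStd .tend .tend
  | sigma {I' I : List InpT} {O' O : List OutSum} :
      (I ≠ [] ∨ O ≠ []) →
      SubStd (.choice I' []) (.choice I []) →
      SubStd (.choice [] O') (.choice [] O) →
      SubStd (.choice I' O') (.choice I O)
  | sigmaIn {I' J' Isup : List InpT} :
      I' ≠ [] →
      I'.length = Isup.length →
      (∀ x ∈ I'.zip Isup, x.1.1 = x.2.1 ∧ x.1.2.1 = x.2.2.1 ∧
        x.1.2.2.1 = x.2.2.2.1 ∧ x.1.2.2.2.1 = x.2.2.2.2.1) →
      (∀ x ∈ I'.zip Isup, SubStd x.1.2.2.2.2 x.2.2.2.2.2) →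
      (∀ j ∈ J', ∃ i ∈ I', j.1 = i.1 ∧ j.2.1 = i.2.1) →
      SubStd (.choice (I' ++ J') []) (.choice Isup [])
  | sigmaOut {O' Osup J : List OutSum} :
      O' ≠ [] →
      O'.length = Osup.length →
      (∀ x ∈ O'.zip Osup, x.1.length = x.2.length ∧
        ∀ y ∈ x.1.zip x.2, y.1.1 = y.2.1 ∧ y.1.2.1 = y.2.2.1) →
      (∀ x ∈ O'.zip Osup, ∀ y ∈ x.1.zip x.2, SubStd y.1.2.2 y.2.2.2) →
      (∀ j ∈ J, ∃ i ∈ O', outPre j = outPre i) →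
      SubStd (.choice [] O') (.choice [] (Osup ++ J))

/-- Standard subtyping extended pointwise to local contexts over the same channels. -/
def CtxStd (Δ' Δ : Ctx) : Prop :=
  Δ'.length = Δ.length ∧ ∀ x ∈ Δ'.zip Δ, x.1.1 = x.2.1 ∧ SubStd x.1.2 x.2.2

/-! ### Processes -/

inductive Val where
  | var (x : ℕ) | natV (n : ℕ) | boolV (b : Bool)
deriving DecidableEq

mutual
/-- Processes of the PMCMP π-calculus. -/
inductive Proc : Type where
  | nil : Proc
  | par (P Q : Proc) : Proc
  | res (s : Session) (P : Proc) : Proc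
  | cond (v : Val) (P Q : Proc) : Proc
  | pdef (X : ℕ) (xs : List ℕ) (cs : List Channel) (body : Proc) (cont : Proc) : Proc
  | call (X : ℕ) (vs : List Val) (cs : List Channel) : Proc
  | mix (c : Channel) (M : MSum) : Proc

/-- Mixed choices: sums of inputs and probabilistic output sums. -/
inductive MSum : Type where
  | inp (p q : Role) (l : Label) (x : ℕ) (P : Proc) : MSum
  | psum (O : OSum) : MSum
  | madd (M₁ M₂ : MSum) : MSum

/-- Probabilistic output sums. -/
inductive OSum : Type where
  | out (prob : ℝ) (p q : Role) (l : Label) (v : Val) (P : Proc) : OSum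
  | otau (prob : ℝ) (P : Proc) : OSum
  | oadd (O₁ O₂ : OSum) : OSum
end

def Val.subst (v : Val) (x : ℕ) (w : Val) : Val :=
  match v with
  | .var y => if y = x then w else .var y
  | v => v

mutual
/-- Capture-avoiding substitution of the value `w` for the variable `x`. -/
def Proc.subst : Proc → ℕ → Val → Proc
  | .nil, _, _ => .nil
  | .par P Q, x, w => .par (P.subst x w) (Q.subst x w)
  | .res s P, x, w => .res s (P.subst x w)
  | .cond v P Q, x, w => .cond (v.subst x w) (P.subst x w) (Q.subst x w)
  | .pdef X xs cs B C, x, w =>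
      if x ∈ xs then .pdef X xs cs B (C.subst x w)
      else .pdef X xs cs (B.subst x w) (C.subst x w)
  | .call X vs cs, x, w => .call X (vs.map (fun v => v.subst x w)) cs
  | .mix c M, x, w => .mix c (M.subst x w)
def MSum.subst : MSum → ℕ → Val → MSum
  | .inp p q l y P, x, w => if y = x then .inp p q l y P else .inp p q l y (P.subst x w)
  | .psum O, x, w => .psum (O.subst x w)
  | .madd M N, x, w => .madd (M.subst x w) (N.subst x w)
def OSum.subst : OSum → ℕ → Val → OSum
  | .out pr p q l v P, x, w => .out pr p q l (v.subst x w) (P.subst x w)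
  | .otau pr P, x, w => .otau pr (P.subst x w)
  | .oadd O₁ O₂, x, w => .oadd (O₁.subst x w) (O₂.subst x w)
end

/-- Simultaneous substitution `P{v⃗/x⃗}` realized by iterated substitution. -/
def Proc.substList (P : Proc) (xs : List ℕ) (vs : List Val) : Proc :=
  (xs.zip vs).foldl (fun acc xv => acc.subst xv.1 xv.2) P

mutual
/-- Free sessions of a process. -/
def Proc.fs : Proc → Finset Session
  | .nil => ∅
  | .par P Q => P.fs ∪ Q.fs
  | .res s P => P.fs.erase s
  | .cond _ P Q => P.fs ∪ Q.fs
  | .pdef _ _ cs B C => (cs.map Channel.session).toFinset ∪ B.fs ∪ C.fs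
  | .call _ _ cs => (cs.map Channel.session).toFinset
  | .mix c M => insert c.session M.fs
def MSum.fs : MSum → Finset Session
  | .inp _ _ _ _ P => P.fs
  | .psum O => O.fs
  | .madd M N => M.fs ∪ N.fs
def OSum.fs : OSum → Finset Session
  | .out _ _ _ _ _ P => P.fs
  | .otau _ P => P.fs
  | .oadd O₁ O₂ => O₁.fs ∪ O₂.fs
end

mutual
/-- Free process variables of a process. -/
def Proc.fpv : Proc → Finset ℕ
  | .nil => ∅
  | .par P Q => P.fpv ∪ Q.fpv
  | .res _ P => P.fpv
  | .cond _ P Q => P.fpv ∪ Q.fpv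
  | .pdef X _ _ B C => (B.fpv ∪ C.fpv).erase X
  | .call X _ _ => {X}
  | .mix _ M => M.fpv
def MSum.fpv : MSum → Finset ℕ
  | .inp _ _ _ _ P => P.fpv
  | .psum O => O.fpv
  | .madd M N => M.fpv ∪ N.fpv
def OSum.fpv : OSum → Finset ℕ
  | .out _ _ _ _ _ P => P.fpv
  | .otau _ P => P.fpv
  | .oadd O₁ O₂ => O₁.fpv ∪ O₂.fpv
end

/-- Structural congruence on processes. -/
inductive SCong : Proc → Proc → Prop where
  | refl (P : Proc) : SCong P P
  | symm {P Q : Proc} : SCong P Q → SCong Q P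
  | trans {P Q R : Proc} : SCong P Q → SCong Q R → SCong P R
  | parCong {P P' Q Q' : Proc} : SCong P P' → SCong Q Q' → SCong (.par P Q) (.par P' Q')
  | resCong {s : Session} {P P' : Proc} : SCong P P' → SCong (.res s P) (.res s P')
  | pdefCong {X xs cs B C C'} : SCong C C' → SCong (.pdef X xs cs B C) (.pdef X xs cs B C')
  | parNil {P : Proc} : SCong (.par P .nil) P
  | parComm {P Q : Proc} : SCong (.par P Q) (.par Q P)
  | parAssoc {P Q R : Proc} : SCong (.par (.par P Q) R) (.par P (.par Q R))
  | resNil {s : Session} : SCong (.res s .nil) .nil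
  | resSwap {s s' : Session} {P : Proc} : SCong (.res s (.res s' P)) (.res s' (.res s P))
  | scope {s : Session} {P Q : Proc} : s ∉ P.fs →
      SCong (.par P (.res s Q)) (.res s (.par P Q))
  | defRes {X xs cs B P} {s : Session} :
      s ∉ (cs.map Channel.session).toFinset ∪ Proc.fs B →
      SCong (.pdef X xs cs B (.res s P)) (.res s (.pdef X xs cs B P))
  | defPar {X xs cs B P Q} : X ∉ Proc.fpv Q →
      SCong (.par (.pdef X xs cs B P) Q) (.pdef X xs cs B (.par P Q))

/-- `M` contains the input summand `p←q?l(x).P`. -/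
inductive MHasInp : MSum → Role → Role → Label → ℕ → Proc → Prop where
  | here {p q l x P} : MHasInp (.inp p q l x P) p q l x P
  | left {M₁ M₂ p q l x P} : MHasInp M₁ p q l x P → MHasInp (.madd M₁ M₂) p q l x P
  | right {M₁ M₂ p q l x P} : MHasInp M₂ p q l x P → MHasInp (.madd M₁ M₂) p q l x P

/-- `M` contains the probabilistic sum `O`. -/
inductive MHasO : MSum → OSum → Prop where
  | here {O} : MHasO (.psum O) O
  | left {M₁ M₂ O} : MHasO M₁ O → MHasO (.madd M₁ M₂) O
  | right {M₁ M₂ O} : MHasO M₂ O → MHasO (.madd M₁ M₂) O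

/-- `O` contains the output summand `①_{prob} p→q!l⟨v⟩.P`. -/
inductive OHasOut : OSum → ℝ → Role → Role → Label → Val → Proc → Prop where
  | here {prob p q l v P} : OHasOut (.out prob p q l v P) prob p q l v P
  | left {O₁ O₂ prob p q l v P} : OHasOut O₁ prob p q l v P → OHasOut (.oadd O₁ O₂) prob p q l v P
  | right {O₁ O₂ prob p q l v P} : OHasOut O₂ prob p q l v P → OHasOut (.oadd O₁ O₂) prob p q l v P

/-- `O` contains the internal-action summand `①_{prob} τ.P`. -/
inductive OHasTau : OSum → ℝ → Proc → Prop where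
  | here {prob P} : OHasTau (.otau prob P) prob P
  | left {O₁ O₂ prob P} : OHasTau O₁ prob P → OHasTau (.oadd O₁ O₂) prob P
  | right {O₁ O₂ prob P} : OHasTau O₂ prob P → OHasTau (.oadd O₁ O₂) prob P

/-- Probabilistic reduction semantics `P ⟶_p P'`. -/
inductive PRed : Proc → ℝ → Proc → Prop where
  | condT {P Q} : PRed (.cond (.boolV true) P Q) 1 P
  | condF {P Q} : PRed (.cond (.boolV false) P Q) 1 Q
  | defNil {X xs cs B} : PRed (.pdef X xs cs B .nil) 1 .nil
  | rtau {c M O prob P} : MHasO M O → OHasTau O prob P → PRed (.mix c M) prob P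
  | com {c₁ c₂ : Channel} {M₁ M₂ O prob q p l v x Q P} :
      c₁.session = c₂.session →
      MHasO M₁ O → OHasOut O prob q p l v Q →
      MHasInp M₂ p q l x P →
      PRed (.par (.mix c₁ M₁) (.mix c₂ M₂)) prob (.par Q (P.subst x v))
  | rdef {X xs cs B Q vs} : xs.length = vs.length →
      PRed (.pdef X xs cs B (.par (.call X vs cs) Q)) 1
           (.pdef X xs cs B (.par (B.substList xs vs) Q))
  | rpar {P P' Q prob} : PRed P prob P' → PRed (.par P Q) prob (.par P' Q)
  | rres {s P P' prob} : PRed P prob P' → PRed (.res s P) prob (.res s P')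
  | rdefIn {X xs cs B P P' prob} : PRed P prob P' →
      PRed (.pdef X xs cs B P) prob (.pdef X xs cs B P')
  | rstruct {P P' Q Q' prob} : SCong P P' → PRed P' prob Q' → SCong Q' Q → PRed P prob Q

/-- Multi-step reduction `P ⟹_p P'`. -/
inductive PReds : Proc → ℝ → Proc → Prop where
  | refl (P : Proc) : PReds P 1 P
  | step {P P' P'' p q} : PRed P p P' → PReds P' q P'' → PReds P (p * q) P''

/-! ### Typing -/

/-- Global environments: variable typings and process-variable signatures. -/
structure GEnv where
  vars : ℕ → Option Base
  procs : ℕ → Option (List Base × List SType)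

def GEnv.addVar (Γ : GEnv) (x : ℕ) (U : Base) : GEnv :=
  ⟨fun y => if y = x then some U else Γ.vars y, Γ.procs⟩

def GEnv.addVars (Γ : GEnv) (xs : List ℕ) (Us : List Base) : GEnv :=
  (xs.zip Us).foldl (fun g p => g.addVar p.1 p.2) Γ

def GEnv.addProc (Γ : GEnv) (X : ℕ) (sig : List Base × List SType) : GEnv :=
  ⟨Γ.vars, fun Y => if Y = X then some sig else Γ.procs Y⟩

def GEnv.empty : GEnv := ⟨fun _ => none, fun _ => none⟩

/-- Value typing `Γ ⊢ v : U`. -/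
inductive TypV : GEnv → Val → Base → Prop where
  | nat {Γ n} : TypV Γ (.natV n) .nat
  | bool {Γ b} : TypV Γ (.boolV b) .bool
  | var {Γ x U} : GEnv.vars Γ x = some U → TypV Γ (.var x) U

mutual
/-- Process typing `Γ ⊢ P ▷ Δ`. -/
inductive Typ : GEnv → Proc → Ctx → Prop where
  | nil {Γ} : Typ Γ .nil []
  | res {Γ s P Δ Δs} : safe Δs → (∀ e ∈ Δs, (e : Channel × SType).1.session = s) →
      Typ Γ P (Δ ++ Δs) → Typ Γ (.res s P) Δ
  | cond {Γ v P Q Δ} : TypV Γ v .bool → Typ Γ P Δ → Typ Γ Q Δ → Typ Γ (.cond v P Q) Δ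
  | par {Γ P Q Δ₁ Δ₂} : Linear Δ₁ Δ₂ → Typ Γ P Δ₁ → Typ Γ Q Δ₂ →
      Typ Γ (.par P Q) (Δ₁ ++ Δ₂)
  | pdef {Γ X xs cs B C Δ Us Ts} :
      xs.length = Us.length → cs.length = Ts.length →
      Typ ((GEnv.addProc Γ X (Us, Ts)).addVars xs Us) B (cs.zip Ts) →
      Typ (GEnv.addProc Γ X (Us, Ts)) C Δ →
      Typ Γ (.pdef X xs cs B C) Δ
  | call {Γ X vs cs Us Ts} :
      GEnv.procs Γ X = some (Us, Ts) →
      vs.length = Us.length →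
      (∀ x ∈ vs.zip Us, TypV Γ x.1 x.2) →
      cs.length = Ts.length →
      Typ Γ (.call X vs cs) (cs.zip Ts)
  | sub {Γ P Δ' Δ} : Typ Γ P Δ' → SubT (.plain Δ') 1 Δ → Typ Γ P Δ
  | mix {Γ c M Δ I O} : TypM Γ c M Δ I O → Typ Γ (.mix c M) (Δ ++ [(c, SType.choice I O)])

/-- Typing of mixed-choice sums: `Γ ⊢ c M ▷ Δ, c : Σ I + Σ O`. -/
inductive TypM : GEnv → Channel → MSum → Ctx → List InpT → List OutSum → Prop where
  | inp {Γ c p q l x P Δ U T} : p ∈ c.roles →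
      Typ (Γ.addVar x U) P (Δ ++ [(c, T)]) →
      TypM Γ c (.inp p q l x P) Δ [(p, q, l, U, T)] []
  | psum {Γ c O Δ o} : TypO Γ c O Δ o → TypM Γ c (.psum O) Δ [] [o]
  | madd {Γ c M₁ M₂ Δ I₁ I₂ O₁ O₂} :
      TypM Γ c M₁ Δ I₁ O₁ → TypM Γ c M₂ Δ I₂ O₂ →
      TypM Γ c (.madd M₁ M₂) Δ (I₁ ++ I₂) (O₁ ++ O₂)

/-- Typing of probabilistic output sums. -/
inductive TypO : GEnv → Channel → OSum → Ctx → OutSum → Prop where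
  | out {Γ c prob p q l v P Δ U T} : p ∈ c.roles →
      TypV Γ v U → Typ Γ P (Δ ++ [(c, T)]) →
      TypO Γ c (.out prob p q l v P) Δ [(prob, some (p, q, l, U), T)]
  | otau {Γ c prob P Δ T} : Typ Γ P (Δ ++ [(c, T)]) →
      TypO Γ c (.otau prob P) Δ [(prob, (none : Head), T)]
  | oadd {Γ c O₁ O₂ Δ o₁ o₂} : TypO Γ c O₁ Δ o₁ → TypO Γ c O₂ Δ o₂ →
      TypO Γ c (.oadd O₁ O₂) Δ (o₁ ++ o₂)
end

/-- One-step splitting: peel off the last assignment of the supertype. -/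
lemma split_subtyping_one (Δ Δ' : Ctx) (ct : Channel × SType)
    (h : SubT (.plain Δ) 1 (Δ' ++ [ct])) :
    ∃ Δa Δb, Δ = Δa ++ Δb ∧ SubT (.plain Δa) 1 Δ' ∧ SubT (.plain Δb) 1 [ct] := by
  generalize hΛ : ACtx.plain Δ = Λ at h
  generalize hT : Δ' ++ [ct] = Tgt at h
  generalize hp : (1 : ℝ) = p at h
  induction h with
  | empty1 => exact absurd hT.symm (by simp)
  | pend _ => cases hΛ
  | @split Δa Δb Δ0 ct0 h1 h2 _ _ =>
      cases hΛ
      obtain ⟨h3, h4⟩ := List.append_inj' hT rfl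
      cases List.singleton_injective h4
      exact ⟨Δa, Δb, rfl, h3 ▸ h1, h2⟩
  | sigma1 hl hne hall _ =>
      cases hΛ
      subst hp
      have hΔ' : Δ' = [] := by
        cases Δ' with
        | nil => rfl
        | cons a t => simp at hT
      subst hΔ'
      simp at hT
      exact ⟨[], Δ, by simp, SubT.empty1, hT ▸ SubT.sigma1 hl hne hall⟩
  | sigma2 _ _ _ _ _ => cases hΛ
  | sigmaIn _ _ _ _ _ => cases hΛ
  | sigmaOut _ _ _ _ _ => cases hΛ
  | oplus _ _ _ _ _ => cases hΛ
  | sinp _ _ _ _ _ _ => cases hΛ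
  | sout _ _ _ _ _ _ => cases hΛ
  | link _ _ _ _ => cases hΛ
  | tauL _ _ => cases hΛ
  | tauR h1 _ =>
      subst hΛ
      subst hp
      have hΔ' : Δ' = [] := by
        cases Δ' with
        | nil => rfl
        | cons a t => simp at hT
      subst hΔ'
      simp at hT
      exact ⟨[], Δ, by simp, SubT.empty1, hT ▸ SubT.tauR h1⟩

/-- Splitting of subtyping: `Δ ≤₁ Δ₁, Δ₂` implies `Δ` splits into subtypes of `Δ₁` and `Δ₂`. -/
theorem split_subtyping (Δ Δ₁ Δ₂ : Ctx) (h : SubT (.plain Δ) 1 (Δ₁ ++ Δ₂)) :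
    ∃ Δ₁' Δ₂', Δ = Δ₁' ++ Δ₂' ∧ SubT (.plain Δ₁') 1 Δ₁ ∧ SubT (.plain Δ₂') 1 Δ₂ := by
  induction Δ₂ using List.reverseRecOn generalizing Δ with
  | nil => exact ⟨Δ, [], by simp, by simpa using h, SubT.empty1⟩
  | append_singleton l a ih =>
      rw [show Δ₁ ++ (l ++ [a]) = (Δ₁ ++ l) ++ [a] by simp] at h
      obtain ⟨Δa, Δb, rfl, ha, hb⟩ := split_subtyping_one _ _ _ h
      obtain ⟨Δ₁', Δm, rfl, h1, h2⟩ := ih Δa ha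
      exact ⟨Δ₁', Δm ++ Δb, by simp, h1, SubT.split h2 hb⟩
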